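/- arXiv:1701.01337 — 5 statements merged into one kernel-verified Lean document; each statement's English description precedes it below -/
import Mathlib

section
/- For every finite simple graph G on n vertices (n even, n ≥ 2) and every vector d ∈ ℝ^n, g(G,d) ≤ bw(G); consequently h(G) ≤ bw(G). -/
open Matrix BigOperators Finset

noncomputable section

/-- Adjacency matrix of a graph on `Fin n`, with real entries. -/
def adjA {n : ℕ} (G : SimpleGraph (Fin n)) [DecidableRel G.Adj] :
    Matrix (Fin n) (Fin n) ℝ :=
  Matrix.of fun i j => if G.Adj i j then (1 : ℝ) else 0

/-- A bisection vector: entries in `{+1, -1}` summing to zero. -/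
def IsBisection {n : ℕ} (x : Fin n → ℝ) : Prop :=
  (∀ i, x i = 1 ∨ x i = -1) ∧ ∑ i, x i = 0

/-- Cut width of a `±1` vector: `∑_{{i,j}∈E} (1 - x_i x_j)/2`, written as a sum
over ordered pairs (each edge counted twice, hence the `/4`). -/
def cw {n : ℕ} (G : SimpleGraph (Fin n)) [DecidableRel G.Adj] (x : Fin n → ℝ) : ℝ :=
  (∑ i, ∑ j, adjA G i j * (1 - x i * x j)) / 4

/-- Bisection width: minimum cut width over all bisection vectors. -/
def bw {n : ℕ} (G : SimpleGraph (Fin n)) [DecidableRel G.Adj] : ℝ :=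
  sInf {c | ∃ x : Fin n → ℝ, IsBisection x ∧ cw G x = c}

/-- `λ_S(B)`: supremum of the Rayleigh quotient of `B` over nonzero vectors of
coordinate sum zero. -/
def lamS {n : ℕ} (B : Matrix (Fin n) (Fin n) ℝ) : ℝ :=
  sSup {r | ∃ x : Fin n → ℝ, x ≠ 0 ∧ ∑ i, x i = 0 ∧
    r = (x ⬝ᵥ B.mulVec x) / (∑ i, (x i) ^ 2)}

/-- Sum of all entries of a matrix. -/
def msum {n : ℕ} (M : Matrix (Fin n) (Fin n) ℝ) : ℝ := ∑ i, ∑ j, M i j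

/-- Boppana's function `g(G,d)`. -/
def gB {n : ℕ} (G : SimpleGraph (Fin n)) [DecidableRel G.Adj] (d : Fin n → ℝ) : ℝ :=
  (msum (adjA G + Matrix.diagonal d) - n * lamS (adjA G + Matrix.diagonal d)) / 4

/-- Boppana's lower bound `h(G) = sup_d g(G,d)`. -/
def hB {n : ℕ} (G : SimpleGraph (Fin n)) [DecidableRel G.Adj] : ℝ :=
  sSup {r | ∃ d : Fin n → ℝ, r = gB G d}

lemma rayleigh_bdd {n : ℕ} (B : Matrix (Fin n) (Fin n) ℝ) :
    BddAbove {r | ∃ x : Fin n → ℝ, x ≠ 0 ∧ ∑ i, x i = 0 ∧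
      r = (x ⬝ᵥ B.mulVec x) / (∑ i, (x i) ^ 2)} := by
  refine ⟨∑ i, ∑ j, |B i j|, ?_⟩
  rintro r ⟨x, hx, -, rfl⟩
  have hS : 0 < ∑ i, (x i) ^ 2 := by
    obtain ⟨i, hi⟩ := Function.ne_iff.mp hx
    exact Finset.sum_pos' (fun k _ => sq_nonneg _)
      ⟨i, Finset.mem_univ i, by rw [← sq_abs]; exact pow_pos (abs_pos.mpr hi) 2⟩
  rw [div_le_iff₀ hS]
  have key : x ⬝ᵥ B.mulVec x = ∑ i, ∑ j, x i * (B i j * x j) := by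
    simp [dotProduct, Matrix.mulVec, Finset.mul_sum]
  rw [key, Finset.sum_mul]
  refine Finset.sum_le_sum fun i _ => ?_
  rw [Finset.sum_mul]
  refine Finset.sum_le_sum fun j _ => ?_
  have hxi : (x i) ^ 2 ≤ ∑ k, (x k) ^ 2 :=
    Finset.single_le_sum (fun k _ => sq_nonneg (x k)) (Finset.mem_univ i)
  have hxj : (x j) ^ 2 ≤ ∑ k, (x k) ^ 2 :=
    Finset.single_le_sum (fun k _ => sq_nonneg (x k)) (Finset.mem_univ j)
  have h1 : x i * (B i j * x j) ≤ |x i| * (|B i j| * |x j|) := by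
    calc x i * (B i j * x j) ≤ |x i * (B i j * x j)| := le_abs_self _
      _ = |x i| * (|B i j| * |x j|) := by rw [abs_mul, abs_mul]
  have h2 : |x i| * |x j| ≤ ∑ k, (x k) ^ 2 := by
    nlinarith [sq_nonneg (|x i| - |x j|), sq_abs (x i), sq_abs (x j)]
  nlinarith [abs_nonneg (B i j), abs_nonneg (x i), abs_nonneg (x j)]

lemma gB_le_cw {n : ℕ} (hn2 : 2 ≤ n) (G : SimpleGraph (Fin n)) [DecidableRel G.Adj]
    (d : Fin n → ℝ) (x : Fin n → ℝ) (hx : IsBisection x) : gB G d ≤ cw G x := by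
  obtain ⟨hpm, hsum⟩ := hx
  have hn0 : (0 : ℝ) < n := by exact_mod_cast Nat.lt_of_lt_of_le Nat.zero_lt_two hn2
  have hsq : ∀ i, (x i) ^ 2 = 1 := by
    intro i; rcases hpm i with h | h <;> rw [h] <;> norm_num
  have hssq : ∑ i, (x i) ^ 2 = (n : ℝ) := by
    simp [hsq]
  have hxne : x ≠ 0 := by
    intro h0
    have := hsq ⟨0, by omega⟩
    rw [h0] at this; simp at this
  set B := adjA G + Matrix.diagonal d with hB
  -- the Rayleigh quotient of x is a lower bound for lamS
  have hmem : (x ⬝ᵥ B.mulVec x) / (n : ℝ) ∈ {r | ∃ y : Fin n → ℝ, y ≠ 0 ∧ ∑ i, y i = 0 ∧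
      r = (y ⬝ᵥ B.mulVec y) / (∑ i, (y i) ^ 2)} := ⟨x, hxne, hsum, by rw [hssq]⟩
  have hlam : (x ⬝ᵥ B.mulVec x) / (n : ℝ) ≤ lamS B := le_csSup (rayleigh_bdd B) hmem
  -- compute the quadratic form
  have hdiag : x ⬝ᵥ (Matrix.diagonal d).mulVec x = ∑ i, d i := by
    simp only [Matrix.mulVec_diagonal, dotProduct]
    refine Finset.sum_congr rfl fun i _ => ?_
    have h : x i * (d i * x i) = d i * (x i) ^ 2 := by ring
    rw [h, hsq i, mul_one]
  have hquad : x ⬝ᵥ B.mulVec x = (x ⬝ᵥ (adjA G).mulVec x) + ∑ i, d i := by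
    rw [hB, Matrix.add_mulVec, dotProduct_add, hdiag]
  -- compute the entry sum
  have hdiagsum : ∀ i, ∑ j, Matrix.diagonal d i j = d i := by
    intro i; simp [Matrix.diagonal_apply, Finset.sum_ite_eq]
  have hmsum : msum B = msum (adjA G) + ∑ i, d i := by
    simp only [hB, msum, Matrix.add_apply, Finset.sum_add_distrib, hdiagsum]
  -- rewrite the quadratic form of the adjacency matrix
  have hAx : x ⬝ᵥ (adjA G).mulVec x = ∑ i, ∑ j, adjA G i j * (x i * x j) := by
    simp only [dotProduct, Matrix.mulVec, Finset.mul_sum]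
    exact Finset.sum_congr rfl fun i _ => Finset.sum_congr rfl fun j _ => by ring
  have hcw : cw G x = (msum (adjA G) - ∑ i, ∑ j, adjA G i j * (x i * x j)) / 4 := by
    unfold cw msum
    congr 1
    rw [← Finset.sum_sub_distrib]
    refine Finset.sum_congr rfl fun i _ => ?_
    rw [← Finset.sum_sub_distrib]
    exact Finset.sum_congr rfl fun j _ => by ring
  have hle : x ⬝ᵥ B.mulVec x ≤ (n : ℝ) * lamS B := by
    have h1 : x ⬝ᵥ B.mulVec x = (n : ℝ) * (x ⬝ᵥ B.mulVec x / (n : ℝ)) := by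
      field_simp
    rw [h1]
    exact mul_le_mul_of_nonneg_left hlam hn0.le
  have hgB : gB G d = (msum B - n * lamS B) / 4 := by rw [gB, ← hB]
  rw [hgB, hcw]
  rw [hquad, hAx] at hle
  linarith [hmsum, hle]

/-- for every graph on `n` vertices (`n` even, `n ≥ 2`) and every
`d ∈ ℝ^n`, `g(G,d) ≤ bw(G)`; consequently `h(G) ≤ bw(G)`. -/
theorem boppana_lower_bound {n : ℕ} (hn2 : 2 ≤ n) (hne : Even n)
    (G : SimpleGraph (Fin n)) [DecidableRel G.Adj] (d : Fin n → ℝ) :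
    gB G d ≤ bw G ∧ hB G ≤ bw G := by
  obtain ⟨m, hm⟩ := hne
  have hmn : n = 2 * m := by omega
  -- a concrete bisection vector
  set x0 : Fin n → ℝ := fun i => if (i : ℕ) < m then 1 else -1 with hx0
  have hbis : IsBisection x0 := by
    constructor
    · intro i; by_cases h : (i : ℕ) < m <;> simp [hx0, h]
    · rw [Fin.sum_univ_eq_sum_range (fun i => if i < m then (1 : ℝ) else -1)]
      rw [Finset.range_eq_Ico, ← Finset.sum_Ico_consecutive _ (Nat.zero_le m) (by omega : m ≤ n)]
      have h1 : ∑ i ∈ Finset.Ico 0 m, (if i < m then (1 : ℝ) else -1) = m := by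
        rw [Finset.sum_congr rfl fun i hi => if_pos (Finset.mem_Ico.mp hi).2]
        simp
      have h2 : ∑ i ∈ Finset.Ico m n, (if i < m then (1 : ℝ) else -1) = -(m : ℝ) := by
        rw [Finset.sum_congr rfl fun i hi => if_neg (by
          have := (Finset.mem_Ico.mp hi).1; omega)]
        rw [Finset.sum_const, Nat.card_Ico]
        have : n - m = m := by omega
        rw [this]; simp
      rw [h1, h2]; ring
  have hne' : {c | ∃ x : Fin n → ℝ, IsBisection x ∧ cw G x = c}.Nonempty :=
    ⟨cw G x0, x0, hbis, rfl⟩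
  have hbw : ∀ d' : Fin n → ℝ, gB G d' ≤ bw G := by
    intro d'
    refine le_csInf hne' ?_
    rintro c ⟨x, hx, rfl⟩
    exact gB_le_cw hn2 G d' x hx
  refine ⟨hbw d, ?_⟩
  refine csSup_le ⟨gB G d, d, rfl⟩ ?_
  rintro r ⟨d', rfl⟩
  exact hbw d'
end
end

section
/- For every finite simple graph G on n vertices (n even, n ≥ 2) and every d ∈ ℝ^n, the relaxed bisection lower bound g'(G,d) := min_{x ∈ S, ‖x‖² = n} f(G,d,x) satisfies g'(G,d) = g(G,−4d), where f(G,d,x) = ∑_{{i,j}∈E} (1 − x_i x_j)/2 + ∑_{i∈V} d_i (x_i² − 1). -/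
open Matrix BigOperators Finset

noncomputable section

/-- Boppana's function `f(G,d,x) = ∑_{{i,j}∈E} (1 - x_i x_j)/2 + ∑_i d_i (x_i² - 1)`
(the edge sum written over ordered pairs, hence `/4`). -/
def fB {n : ℕ} (G : SimpleGraph (Fin n)) [DecidableRel G.Adj]
    (d x : Fin n → ℝ) : ℝ :=
  (∑ i, ∑ j, adjA G i j * (1 - x i * x j)) / 4 + ∑ i, d i * ((x i) ^ 2 - 1)

/-- The relaxed lower bound `g'(G,d) = min_{x ∈ S, ‖x‖² = n} f(G,d,x)`. -/
def gB' {n : ℕ} (G : SimpleGraph (Fin n)) [DecidableRel G.Adj] (d : Fin n → ℝ) : ℝ :=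
  sInf {r | ∃ x : Fin n → ℝ, (∑ i, x i = 0) ∧ (∑ i, (x i) ^ 2 = n) ∧ r = fB G d x}

/-- Quadratic form expansion. -/
lemma quad_expand {n : ℕ} (M : Matrix (Fin n) (Fin n) ℝ) (x : Fin n → ℝ) :
    x ⬝ᵥ M.mulVec x = ∑ i, ∑ j, M i j * (x i * x j) := by
  simp only [dotProduct, Matrix.mulVec, Finset.mul_sum]
  exact Finset.sum_congr rfl fun i _ => Finset.sum_congr rfl fun j _ => by ring

/-- `g'(G,d) = g(G, -4d)`. -/
theorem gPrime_eq_g_neg_four {n : ℕ} (hn2 : 2 ≤ n) (hne : Even n)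
    (G : SimpleGraph (Fin n)) [DecidableRel G.Adj] (d : Fin n → ℝ) :
    gB' G d = gB G (fun i => -4 * d i) := by
  have hnpos : (0:ℝ) < n := by
    have : (0:ℕ) < n := by omega
    exact_mod_cast this
  set B : Matrix (Fin n) (Fin n) ℝ := adjA G + Matrix.diagonal (fun i => -4 * d i) with hBdef
  set q : (Fin n → ℝ) → ℝ := fun x => x ⬝ᵥ B.mulVec x with hqdef
  set a : ℝ := msum B with hadef
  -- key algebraic identity
  have key : ∀ x : Fin n → ℝ, fB G d x = (a - q x) / 4 := by
    intro x
    have hq : q x = (∑ i, ∑ j, adjA G i j * (x i * x j)) + ∑ i, (-4 * d i) * (x i)^2 := by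
      rw [hqdef]
      simp only [quad_expand, hBdef, Matrix.add_apply, Matrix.diagonal_apply]
      rw [← Finset.sum_add_distrib]
      refine Finset.sum_congr rfl fun i _ => ?_
      rw [show (∑ j, (adjA G i j + if i = j then -4 * d i else 0) * (x i * x j))
          = ∑ j, (adjA G i j * (x i * x j)
              + if i = j then (-4 * d i) * (x i * x j) else 0) by
        refine Finset.sum_congr rfl fun j _ => ?_; split <;> ring]
      rw [Finset.sum_add_distrib,
        Finset.sum_ite_eq univ i (fun j => (-4 * d i) * (x i * x j))]
      simp only [Finset.mem_univ, if_true]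
      ring
    have ha : a = msum (adjA G) + ∑ i, (-4 * d i) := by
      rw [hadef, msum, msum, ← Finset.sum_add_distrib]
      refine Finset.sum_congr rfl fun i _ => ?_
      simp only [hBdef, Matrix.add_apply]
      rw [Finset.sum_add_distrib]
      congr 1
      simp [Matrix.diagonal_apply, Finset.sum_ite_eq]
    rw [fB, hq, ha, msum]
    have h1 : ∑ i, ∑ j, adjA G i j * (1 - x i * x j)
        = (∑ i, ∑ j, adjA G i j) - ∑ i, ∑ j, adjA G i j * (x i * x j) := by
      rw [← Finset.sum_sub_distrib]
      refine Finset.sum_congr rfl fun i _ => ?_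
      rw [← Finset.sum_sub_distrib]
      refine Finset.sum_congr rfl fun j _ => ?_; ring
    have h2 : ∑ i, d i * ((x i)^2 - 1) = (∑ i, d i * (x i)^2) - ∑ i, d i := by
      rw [← Finset.sum_sub_distrib]
      refine Finset.sum_congr rfl fun i _ => ?_; ring
    have h3 : ∑ i, (-4 * d i) * (x i)^2 = -4 * ∑ i, d i * (x i)^2 := by
      rw [Finset.mul_sum]; refine Finset.sum_congr rfl fun i _ => ?_; ring
    have h4 : ∑ i, (-4 * d i) = -4 * ∑ i, d i := by
      rw [Finset.mul_sum]
    rw [h1, h2, h3, h4]; ring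
  -- the Rayleigh set
  set RS : Set ℝ := {r | ∃ x : Fin n → ℝ, x ≠ 0 ∧ ∑ i, x i = 0 ∧
      r = (x ⬝ᵥ B.mulVec x) / (∑ i, (x i) ^ 2)} with hRSdef
  set S1 : Set ℝ := {r | ∃ x : Fin n → ℝ, (∑ i, x i = 0) ∧ (∑ i, (x i) ^ 2 = n) ∧ r = fB G d x}
    with hS1def
  -- witness vector
  set x0 : Fin n → ℝ := fun i => (-1 : ℝ)^(i:ℕ) with hx0def
  have hx0sum : ∑ i, x0 i = 0 := by
    rw [hx0def, Fin.sum_univ_eq_sum_range, neg_one_geom_sum, if_pos hne]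
  have hx0sq : ∑ i, (x0 i)^2 = n := by
    have h1 : ∀ i : Fin n, (x0 i)^2 = 1 := by
      intro i
      rw [hx0def, ← pow_mul, mul_comm, pow_mul, neg_one_sq, one_pow]
    rw [Finset.sum_congr rfl fun i _ => h1 i]
    simp
  have hx0ne : x0 ≠ 0 := by
    intro h
    rw [h] at hx0sq
    simp at hx0sq
    first
    | omega
    | linarith
  -- positivity of sum of squares for nonzero vectors
  have hspos : ∀ x : Fin n → ℝ, x ≠ 0 → 0 < ∑ i, (x i)^2 := by
    intro x hx
    obtain ⟨i, hi⟩ := Function.ne_iff.mp hx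
    refine lt_of_lt_of_le (lt_of_le_of_ne (sq_nonneg (x i)) (Ne.symm (pow_ne_zero 2 hi))) ?_
    exact Finset.single_le_sum (fun j _ => sq_nonneg (x j)) (Finset.mem_univ i)
  -- RS bounded above
  have hC : BddAbove RS := by
    refine ⟨∑ i, ∑ j, |B i j|, ?_⟩
    rintro r ⟨x, hx, -, rfl⟩
    have hs := hspos x hx
    rw [div_le_iff₀ hs, quad_expand]
    have hterm : ∀ i j : Fin n, B i j * (x i * x j) ≤ |B i j| * ∑ k, (x k)^2 := by
      intro i j
      have h1 : (x i)^2 ≤ ∑ k, (x k)^2 :=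
        Finset.single_le_sum (fun k _ => sq_nonneg (x k)) (Finset.mem_univ i)
      have h2 : (x j)^2 ≤ ∑ k, (x k)^2 :=
        Finset.single_le_sum (fun k _ => sq_nonneg (x k)) (Finset.mem_univ j)
      have h3 : B i j * (x i * x j) ≤ |B i j| * |x i * x j| := by
        calc B i j * (x i * x j) ≤ |B i j * (x i * x j)| := le_abs_self _
        _ = |B i j| * |x i * x j| := abs_mul _ _
      refine h3.trans (mul_le_mul_of_nonneg_left ?_ (abs_nonneg _))
      have := abs_mul_abs_self (x i * x j)
      nlinarith [abs_nonneg (x i * x j), sq_nonneg (x i - x j), sq_nonneg (x i + x j),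
        sq_abs (x i * x j)]
    calc ∑ i, ∑ j, B i j * (x i * x j)
        ≤ ∑ i, ∑ j, |B i j| * ∑ k, (x k)^2 :=
          Finset.sum_le_sum fun i _ => Finset.sum_le_sum fun j _ => hterm i j
      _ = (∑ i, ∑ j, |B i j|) * ∑ k, (x k)^2 := by
          rw [Finset.sum_mul]; exact Finset.sum_congr rfl fun i _ => (Finset.sum_mul _ _ _).symm
  have hRSne : RS.Nonempty := ⟨_, x0, hx0ne, hx0sum, rfl⟩
  -- membership characterization of S1
  have hS1mem : ∀ r, r ∈ S1 ↔ ∃ R ∈ RS, r = (a - n * R) / 4 := by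
    intro r
    constructor
    · rintro ⟨x, hxs, hxn, rfl⟩
      have hxne : x ≠ 0 := by
        intro h; rw [h] at hxn; simp at hxn
        first
        | omega
        | linarith
      refine ⟨q x / ∑ i, (x i)^2, ⟨x, hxne, hxs, rfl⟩, ?_⟩
      rw [key x, hxn]
      field_simp
    · rintro ⟨R, ⟨x, hxne, hxs, rfl⟩, rfl⟩
      set s : ℝ := ∑ i, (x i)^2 with hsdef
      have hs : 0 < s := hspos x hxne
      set c : ℝ := Real.sqrt (n / s) with hcdef
      have hc2 : c^2 = n / s := Real.sq_sqrt (by positivity)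
      refine ⟨c • x, ?_, ?_, ?_⟩
      · simp only [Pi.smul_apply, smul_eq_mul]
        rw [← Finset.mul_sum, hxs, mul_zero]
      · have h2 : ∑ i, ((c • x) i)^2 = c^2 * s := by
          rw [hsdef, Finset.mul_sum]
          refine Finset.sum_congr rfl fun i _ => ?_
          simp only [Pi.smul_apply, smul_eq_mul]; ring
        rw [h2, hc2]; field_simp
      · rw [key]
        have hqc : q (c • x) = c^2 * q x := by
          show (c • x) ⬝ᵥ B *ᵥ (c • x) = c^2 * (x ⬝ᵥ B *ᵥ x)
          rw [Matrix.mulVec_smul, smul_dotProduct, dotProduct_smul,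
            smul_smul, smul_eq_mul]
          ring
        rw [hqc, hc2]
        ring
  -- now compute
  set M : ℝ := sSup RS with hMdef
  have lower : ∀ r ∈ S1, (a - n * M) / 4 ≤ r := by
    intro r hr
    obtain ⟨R, hR, rfl⟩ := (hS1mem r).mp hr
    have : R ≤ M := le_csSup hC hR
    have := mul_le_mul_of_nonneg_left this (le_of_lt hnpos)
    linarith
  have hS1ne : S1.Nonempty := ⟨_, x0, hx0sum, hx0sq, rfl⟩
  have hS1bdd : BddBelow S1 := ⟨(a - n * M) / 4, lower⟩
  have hge : (a - n * M) / 4 ≤ sInf S1 := le_csInf hS1ne lower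
  have hle : sInf S1 ≤ (a - n * M) / 4 := by
    have hub : M ≤ (a - 4 * sInf S1) / n := by
      refine csSup_le hRSne fun R hR => ?_
      have hmem : (a - n * R) / 4 ∈ S1 := (hS1mem _).mpr ⟨R, hR, rfl⟩
      have := csInf_le hS1bdd hmem
      rw [le_div_iff₀ hnpos]
      linarith
    rw [le_div_iff₀ hnpos] at hub
    linarith
  have : sInf S1 = (a - n * M) / 4 := le_antisymm hle hge
  rw [gB', gB]
  exact this
end
end

section
/- Let G be a graph with h(G) = bw(G) and let d^opt ∈ ℝ^n satisfy g(G,d^opt) = bw(G) and ∑_i d^opt_i ≥ 4·bw(G) − 2|E|. Set B^opt = A + diag(d^opt). Then λ_S(B^opt) ≥ 0 and every optimum bisection vector y (i.e., every bisection vector y with cw(y) = bw(G)) is an eigenvector of P·B^opt·P corresponding to the eigenvalue λ_S(B^opt), i.e., P·B^opt·P·y = λ_S(B^opt)·y. -/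
open Matrix BigOperators Finset

noncomputable section

/-- Number of edges of `G`. -/
def edgeCount {n : ℕ} (G : SimpleGraph (Fin n)) [DecidableRel G.Adj] : ℕ :=
  G.edgeFinset.card

/-- The all-ones matrix `J`. -/
def Jmat (n : ℕ) : Matrix (Fin n) (Fin n) ℝ := Matrix.of fun _ _ => (1 : ℝ)

/-- The projection matrix `P = I - J/n`. -/
def Pmat (n : ℕ) : Matrix (Fin n) (Fin n) ℝ := 1 - (n : ℝ)⁻¹ • Jmat n

/-! If `g(G, dᵒᵖᵗ) = bw(G)`, then `n λ_S(B) = sum(B) - 4 bw(G)`, and for an optimum bisection `y`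
(so `yᵢ² = 1` and `cw(y) = bw(G)`) one computes `yᵀ B y = sum(B) - 4 cw(y) = n λ_S(B) = λ_S(B) ‖y‖²`:
`y` attains the maximum of the Rayleigh quotient of `B` on `S`. Since `λ_S(B) ≥ 0` and `P` is
the orthogonal projection onto `S`, the matrix `λ_S(B) I - P B P` is positive semidefinite, and a
vector on which a positive semidefinite form vanishes lies in its kernel. -/

section Rayleigh

variable {ι : Type*} [Fintype ι]

theorem dotProduct_transpose_mul_mul_mulVec {R : Type*} [CommSemiring R]
    (P B : Matrix ι ι R) (z : ι → R) :
    z ⬝ᵥ (Pᵀ * B * P) *ᵥ z = (P *ᵥ z) ⬝ᵥ B *ᵥ (P *ᵥ z) := by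
  rw [← mulVec_mulVec, ← mulVec_mulVec, dotProduct_mulVec, vecMul_transpose]

theorem sum_sq_pos_of_ne_zero {x : ι → ℝ} (hx : x ≠ 0) : 0 < ∑ i, x i ^ 2 := by
  obtain ⟨i, hi⟩ := Function.ne_iff.mp hx
  exact sum_pos' (fun k _ => sq_nonneg (x k)) ⟨i, mem_univ i, pow_two_pos_of_ne_zero hi⟩

theorem dotProduct_mulVec_le_sum_abs_mul (B : Matrix ι ι ℝ) (x : ι → ℝ) :
    x ⬝ᵥ B *ᵥ x ≤ (∑ i, ∑ j, |B i j|) * ∑ i, x i ^ 2 := by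
  have hsq : ∀ i, x i ^ 2 ≤ ∑ k, x k ^ 2 := fun i =>
    single_le_sum (f := fun k => x k ^ 2) (fun k _ => sq_nonneg _) (mem_univ i)
  have hprod : ∀ i j, |x i| * |x j| ≤ ∑ k, x k ^ 2 := fun i j => by
    nlinarith [hsq i, hsq j, sq_abs (x i), sq_abs (x j), sq_nonneg (|x i| - |x j|)]
  calc x ⬝ᵥ B *ᵥ x = ∑ i, ∑ j, x i * (B i j * x j) := by simp only [dotProduct, mulVec, mul_sum]
    _ ≤ ∑ i, ∑ j, |B i j| * ∑ k, x k ^ 2 := by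
      refine sum_le_sum fun i _ => sum_le_sum fun j _ => ?_
      calc x i * (B i j * x j) ≤ |x i * (B i j * x j)| := le_abs_self _
        _ = |B i j| * (|x i| * |x j|) := by rw [abs_mul, abs_mul]; ring
        _ ≤ |B i j| * ∑ k, x k ^ 2 := by gcongr; exact hprod i j
    _ = (∑ i, ∑ j, |B i j|) * ∑ i, x i ^ 2 := by simp only [sum_mul]

end Rayleigh

section lamS

variable {n : ℕ}

theorem bddAbove_rayleigh (B : Matrix (Fin n) (Fin n) ℝ) :
    BddAbove {r | ∃ x : Fin n → ℝ, x ≠ 0 ∧ ∑ i, x i = 0 ∧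
      r = (x ⬝ᵥ B *ᵥ x) / (∑ i, x i ^ 2)} := by
  refine ⟨∑ i, ∑ j, |B i j|, ?_⟩
  rintro r ⟨x, hx, -, rfl⟩
  rw [div_le_iff₀ (sum_sq_pos_of_ne_zero hx)]
  exact dotProduct_mulVec_le_sum_abs_mul B x

theorem dotProduct_mulVec_le_lamS_mul (B : Matrix (Fin n) (Fin n) ℝ) {z : Fin n → ℝ}
    (hz : ∑ i, z i = 0) : z ⬝ᵥ B *ᵥ z ≤ lamS B * ∑ i, z i ^ 2 := by
  obtain rfl | hz0 := eq_or_ne z 0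
  · simp
  rw [← div_le_iff₀ (sum_sq_pos_of_ne_zero hz0)]
  exact le_csSup (bddAbove_rayleigh B) ⟨z, hz0, hz, rfl⟩

end lamS

section Pmat

variable {n : ℕ}

theorem Pmat_isSymm : (Pmat n).IsSymm := by
  ext i j
  simp [Pmat, Jmat, one_apply, eq_comm]

theorem Pmat_mulVec_apply (z : Fin n → ℝ) (i : Fin n) :
    (Pmat n *ᵥ z) i = z i - (∑ j, z j) / n := by
  rw [Pmat, sub_mulVec, smul_mulVec, one_mulVec]
  simp [Jmat, mulVec, dotProduct, div_eq_inv_mul]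

theorem Pmat_mulVec_of_sum_eq_zero {z : Fin n → ℝ} (hz : ∑ i, z i = 0) :
    Pmat n *ᵥ z = z := by
  ext i
  simp [Pmat_mulVec_apply, hz]

theorem sum_Pmat_mulVec (z : Fin n → ℝ) : ∑ i, (Pmat n *ᵥ z) i = 0 := by
  obtain rfl | hn := eq_or_ne n 0
  · simp
  simp only [Pmat_mulVec_apply, sum_sub_distrib, sum_const, card_univ, Fintype.card_fin,
    nsmul_eq_mul]
  field_simp
  ring

theorem sum_sq_Pmat_mulVec_le (z : Fin n → ℝ) :
    ∑ i, (Pmat n *ᵥ z) i ^ 2 ≤ ∑ i, z i ^ 2 := by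
  obtain rfl | hn := eq_or_ne n 0
  · simp
  have hexpand : ∑ i, (Pmat n *ᵥ z) i ^ 2 = ∑ i, z i ^ 2 - (∑ i, z i) ^ 2 / n := by
    simp only [Pmat_mulVec_apply, sub_sq, sum_add_distrib, sum_sub_distrib, ← sum_mul,
      ← mul_sum, sum_const, card_univ, Fintype.card_fin, nsmul_eq_mul]
    field_simp
    ring
  rw [hexpand]
  linarith [div_nonneg (sq_nonneg (∑ i, z i)) (Nat.cast_nonneg (α := ℝ) n)]

end Pmat

theorem Pmat_mul_mul_Pmat_mulVec_eq_lamS_smul {n : ℕ} {B : Matrix (Fin n) (Fin n) ℝ}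
    (hB : B.IsSymm) (hlam : 0 ≤ lamS B) {y : Fin n → ℝ} (hy : ∑ i, y i = 0)
    (hyB : y ⬝ᵥ B *ᵥ y = lamS B * ∑ i, y i ^ 2) :
    (Pmat n * B * Pmat n) *ᵥ y = lamS B • y := by
  set N := lamS B • (1 : Matrix (Fin n) (Fin n) ℝ) - Pmat n * B * Pmat n
  have hquad : ∀ z, z ⬝ᵥ N *ᵥ z
      = lamS B * ∑ i, z i ^ 2 - (Pmat n *ᵥ z) ⬝ᵥ B *ᵥ (Pmat n *ᵥ z) := by
    intro z
    rw [sub_mulVec, dotProduct_sub, smul_mulVec, one_mulVec, dotProduct_smul,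
      ← dotProduct_transpose_mul_mul_mulVec, Pmat_isSymm.eq, smul_eq_mul]
    simp only [dotProduct, sq]
  have hNsymm : N.IsSymm := by
    refine (isSymm_one.smul _).sub ?_
    rw [IsSymm, transpose_mul, transpose_mul, Pmat_isSymm.eq, hB.eq, mul_assoc]
  -- `λ_S(B) ≥ 0` lets the contraction `‖P z‖ ≤ ‖z‖` pass through the factor `λ_S(B)`.
  have hN : N.PosSemidef := .of_dotProduct_mulVec_nonneg (isHermitian_iff_isSymm.2 hNsymm)
    fun z => by
      rw [star_trivial, hquad]
      have hle := dotProduct_mulVec_le_lamS_mul B (sum_Pmat_mulVec z)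
      nlinarith [mul_le_mul_of_nonneg_left (sum_sq_Pmat_mulVec_le z) hlam]
  have hNy : N *ᵥ y = 0 := (hN.dotProduct_mulVec_zero_iff y).1 <| by
    rw [star_trivial, hquad, Pmat_mulVec_of_sum_eq_zero hy, hyB, sub_self]
  rw [sub_mulVec, sub_eq_zero, smul_mulVec, one_mulVec] at hNy
  exact hNy.symm

section Graph

variable {n : ℕ} (G : SimpleGraph (Fin n)) [DecidableRel G.Adj]

theorem adjA_isSymm : (adjA G).IsSymm :=
  G.isSymm_adjMatrix

theorem msum_adjA : msum (adjA G) = 2 * (edgeCount G : ℝ) := by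
  have hdeg : ∀ i, ∑ j, adjA G i j = G.degree i := fun i => by
    simp [adjA, sum_boole, SimpleGraph.degree, SimpleGraph.neighborFinset_eq_filter]
  simp only [msum, hdeg]
  exact_mod_cast G.sum_degrees_eq_twice_card_edges

theorem msum_add_diagonal (M : Matrix (Fin n) (Fin n) ℝ) (d : Fin n → ℝ) :
    msum (M + diagonal d) = msum M + ∑ i, d i := by
  simp [msum, sum_add_distrib, diagonal_apply]

theorem cw_eq (y : Fin n → ℝ) : 4 * cw G y = msum (adjA G) - y ⬝ᵥ adjA G *ᵥ y := by
  simp only [cw, msum, dotProduct, mulVec, mul_sum, ← sum_sub_distrib]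
  rw [mul_div_cancel₀ _ four_ne_zero]
  exact sum_congr rfl fun i _ => sum_congr rfl fun j _ => by ring

theorem dotProduct_adjA_add_diagonal_mulVec {y : Fin n → ℝ} (hy : ∀ i, y i ^ 2 = 1)
    (d : Fin n → ℝ) :
    y ⬝ᵥ (adjA G + diagonal d) *ᵥ y = 2 * (edgeCount G : ℝ) - 4 * cw G y + ∑ i, d i := by
  have hdiag : y ⬝ᵥ diagonal d *ᵥ y = ∑ i, d i := by
    simp only [dotProduct, mulVec_diagonal]
    exact sum_congr rfl fun i _ => by linear_combination d i * hy i
  rw [add_mulVec, dotProduct_add, hdiag, cw_eq, msum_adjA]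
  ring

end Graph

theorem IsBisection.sq_eq_one {n : ℕ} {y : Fin n → ℝ} (hy : IsBisection y) (i : Fin n) :
    y i ^ 2 = 1 := by
  rcases hy.1 i with h | h <;> simp [h]

theorem optimum_bisection_is_eigenvector_general {n : ℕ} (hn2 : 2 ≤ n)
    (G : SimpleGraph (Fin n)) [DecidableRel G.Adj] (dopt : Fin n → ℝ)
    (hg : gB G dopt = bw G)
    (hsum : 4 * bw G - 2 * (edgeCount G : ℝ) ≤ ∑ i, dopt i) :
    0 ≤ lamS (adjA G + Matrix.diagonal dopt) ∧
    ∀ y : Fin n → ℝ, IsBisection y → cw G y = bw G →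
      (Pmat n * (adjA G + Matrix.diagonal dopt) * Pmat n).mulVec y
        = lamS (adjA G + Matrix.diagonal dopt) • y := by
  set B := adjA G + diagonal dopt
  have hnlam : n * lamS B = 2 * (edgeCount G : ℝ) + ∑ i, dopt i - 4 * bw G := by
    rw [gB, msum_add_diagonal, msum_adjA] at hg
    linarith
  have hlam : 0 ≤ lamS B := by
    have hn : (0 : ℝ) < n := by exact_mod_cast (show 0 < n by omega)
    exact nonneg_of_mul_nonneg_right (by linarith) hn
  refine ⟨hlam, fun y hy hcw => ?_⟩
  refine Pmat_mul_mul_Pmat_mulVec_eq_lamS_smul ((adjA_isSymm G).add (isSymm_diagonal dopt))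
    hlam hy.2 ?_
  rw [dotProduct_adjA_add_diagonal_mulVec G hy.sq_eq_one, hcw]
  simp only [hy.sq_eq_one, sum_const, card_univ, Fintype.card_fin, nsmul_eq_mul, mul_one]
  linarith

theorem optimum_bisection_is_eigenvector {n : ℕ} (hn2 : 2 ≤ n) (hne : Even n)
    (G : SimpleGraph (Fin n)) [DecidableRel G.Adj] (dopt : Fin n → ℝ)
    (hh : hB G = bw G) (hg : gB G dopt = bw G)
    (hsum : 4 * bw G - 2 * (edgeCount G : ℝ) ≤ ∑ i, dopt i) :
    0 ≤ lamS (adjA G + Matrix.diagonal dopt) ∧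
    ∀ y : Fin n → ℝ, IsBisection y → cw G y = bw G →
      (Pmat n * (adjA G + Matrix.diagonal dopt) * Pmat n).mulVec y
        = lamS (adjA G + Matrix.diagonal dopt) • y :=
  optimum_bisection_is_eigenvector_general hn2 G dopt hg hsum
end
end

section
/- Let G be a graph with h(G) = bw(G) and let d^opt ∈ ℝ^n satisfy g(G,d^opt) = bw(G) and ∑_i d^opt_i = 4·bw(G) − 2|E|. Set B^opt = A + diag(d^opt). If a bisection vector y is an eigenvector of P·B^opt·P corresponding to the eigenvalue λ_S(B^opt), then cw(y) = bw(G), i.e., y is an optimum bisection vector. -/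
open Matrix BigOperators Finset

noncomputable section

/-- if a bisection vector is an eigenvector of `P·B^opt·P` for the
eigenvalue `λ_S(B^opt)`, then it is an optimum bisection vector. -/
theorem eigenvector_is_optimum_bisection {n : ℕ} (hn2 : 2 ≤ n) (hne : Even n)
    (G : SimpleGraph (Fin n)) [DecidableRel G.Adj] (dopt : Fin n → ℝ)
    (hh : hB G = bw G) (hg : gB G dopt = bw G)
    (hsum : ∑ i, dopt i = 4 * bw G - 2 * (edgeCount G : ℝ))
    (y : Fin n → ℝ) (hy : IsBisection y)
    (heig : (Pmat n * (adjA G + Matrix.diagonal dopt) * Pmat n).mulVec y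
        = lamS (adjA G + Matrix.diagonal dopt) • y) :
    cw G y = bw G := by
  set B := adjA G + Matrix.diagonal dopt with hB'
  set lam := lamS B with hlam
  have h0 : ∑ i, y i = 0 := hy.2
  have hsq : ∀ i, y i * y i = 1 := by
    intro i; rcases hy.1 i with h | h <;> simp [h]
  -- P y = y and yᵀ P = yᵀ
  have hP : (Pmat n).mulVec y = y := by
    funext i
    simp [Pmat, Jmat, Matrix.mulVec, dotProduct, Matrix.sub_apply, Matrix.one_apply,
      Matrix.smul_apply, sub_mul, Finset.sum_sub_distrib, ← Finset.mul_sum, h0,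
      Finset.sum_ite_eq]
  have hPv : Matrix.vecMul y (Pmat n) = y := by
    funext i
    simp [Pmat, Jmat, Matrix.vecMul, dotProduct, Matrix.sub_apply, Matrix.one_apply,
      Matrix.smul_apply, mul_sub, Finset.sum_sub_distrib, ← Finset.sum_mul, h0,
      Finset.sum_ite_eq']
  -- y ⬝ B y = lam * n
  -- y ⬝ B y = lam * n
  have hyy : y ⬝ᵥ y = (n : ℝ) := by
    simp [dotProduct, hsq]
  have key : y ⬝ᵥ B.mulVec y = lam * n := by
    have h1 : y ⬝ᵥ B.mulVec y = y ⬝ᵥ ((Pmat n * B * Pmat n).mulVec y) := by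
      rw [← Matrix.mulVec_mulVec, ← Matrix.mulVec_mulVec, hP,
        Matrix.dotProduct_mulVec y (Pmat n) (B.mulVec y), hPv]
    rw [h1, heig, dotProduct_smul, hyy, smul_eq_mul]
  -- expand y ⬝ B y
  have hmv : ∀ i, B.mulVec y i = (∑ j, adjA G i j * y j) + dopt i * y i := by
    intro i
    simp [hB', Matrix.mulVec, dotProduct, Matrix.add_apply, Matrix.diagonal_apply,
      add_mul, Finset.sum_add_distrib, Finset.sum_ite_eq, ite_mul]
  have expand : y ⬝ᵥ B.mulVec y
      = (∑ i, ∑ j, adjA G i j * (y i * y j)) + ∑ i, dopt i := by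
    unfold dotProduct
    simp only [hmv, mul_add, Finset.sum_add_distrib]
    congr 1
    · refine Finset.sum_congr rfl fun i _ => ?_
      rw [Finset.mul_sum]
      exact Finset.sum_congr rfl fun j _ => by ring
    · refine Finset.sum_congr rfl fun i _ => ?_
      calc y i * (dopt i * y i) = dopt i * (y i * y i) := by ring
        _ = dopt i := by rw [hsq i, mul_one]
  have hQ : ∑ i, ∑ j, adjA G i j * (y i * y j) = lam * n - ∑ i, dopt i := by
    have := expand.symm.trans key
    linarith
  -- msum B = msum A + ∑ d
  have hms : msum B = msum (adjA G) + ∑ i, dopt i := by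
    unfold msum
    simp [hB', Matrix.add_apply, Matrix.diagonal_apply, Finset.sum_add_distrib,
      Finset.sum_ite_eq]
  -- conclude
  have hcw : cw G y = (msum (adjA G) - ∑ i, ∑ j, adjA G i j * (y i * y j)) / 4 := by
    unfold cw msum
    congr 1
    rw [← Finset.sum_sub_distrib]
    refine Finset.sum_congr rfl fun i _ => ?_
    rw [← Finset.sum_sub_distrib]
    exact Finset.sum_congr rfl fun j _ => by ring
  have hgB : gB G dopt = (msum B - n * lam) / 4 := rfl
  rw [hcw, hQ]
  rw [hgB, hms] at hg
  linarith
end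
end

section
/- Let G = (V,E) be a graph with h(G) = bw(G), let y be an optimum bisection vector of G (cw(y) = bw(G)), and let u ≠ v be vertices in the same part of this bisection (y_u = y_v) with {u,v} ∉ E. Then the graph G' = (V, E ∪ {{u,v}}) satisfies h(G') = bw(G'). -/
open Matrix BigOperators Finset

noncomputable section

lemma sumsq_pos {n : ℕ} {x : Fin n → ℝ} (hx : x ≠ 0) : 0 < ∑ i, (x i) ^ 2 := by
  obtain ⟨i, hi⟩ : ∃ i, x i ≠ 0 := by
    by_contra h; push_neg at h; exact hx (funext h)
  exact Finset.sum_pos' (fun k _ => sq_nonneg _) ⟨i, Finset.mem_univ i, by positivity⟩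

lemma quad_eq {n : ℕ} (B : Matrix (Fin n) (Fin n) ℝ) (x : Fin n → ℝ) :
    x ⬝ᵥ B.mulVec x = ∑ i, ∑ j, x i * B i j * x j := by
  simp [dotProduct, Matrix.mulVec, Finset.mul_sum, mul_assoc]

lemma lamS_ge {n : ℕ} (B : Matrix (Fin n) (Fin n) ℝ) (x : Fin n → ℝ)
    (hx : x ≠ 0) (hsum : ∑ i, x i = 0) :
    (x ⬝ᵥ B.mulVec x) / (∑ i, (x i) ^ 2) ≤ lamS B :=
  le_csSup (rayleigh_bdd B) ⟨x, hx, hsum, rfl⟩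

def wv {n : ℕ} (u v : Fin n) : Fin n → ℝ :=
  fun i => if i = u then 1 else if i = v then -1 else 0

lemma wv_ne {n : ℕ} (u v : Fin n) : wv u v ≠ 0 := by
  intro h
  have := congrFun h u
  simp [wv] at this

lemma wv_sum {n : ℕ} (u v : Fin n) (huv : u ≠ v) : ∑ i, wv u v i = 0 := by
  have h : ∀ i, wv u v i = (if i = u then (1:ℝ) else 0) + (if i = v then (-1:ℝ) else 0) := by
    intro i
    unfold wv
    split_ifs with h1 h2 <;> simp_all
  simp [h, Finset.sum_add_distrib, Finset.sum_ite_eq']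

lemma lamS_mono {n : ℕ} (u v : Fin n) (huv : u ≠ v) (B B' : Matrix (Fin n) (Fin n) ℝ)
    (h : ∀ x : Fin n → ℝ, x ⬝ᵥ B'.mulVec x ≤ x ⬝ᵥ B.mulVec x) :
    lamS B' ≤ lamS B := by
  have hmem : ((wv u v) ⬝ᵥ B'.mulVec (wv u v)) / (∑ i, (wv u v i) ^ 2) ∈
      {r | ∃ x : Fin n → ℝ, x ≠ 0 ∧ ∑ i, x i = 0 ∧
        r = (x ⬝ᵥ B'.mulVec x) / (∑ i, (x i) ^ 2)} :=
    ⟨wv u v, wv_ne u v, wv_sum u v huv, rfl⟩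
  apply csSup_le ⟨_, hmem⟩
  rintro r ⟨x, hx, hsum, rfl⟩
  refine le_trans ?_ (lamS_ge B x hx hsum)
  exact div_le_div_of_nonneg_right (h x) (sumsq_pos hx).le

lemma boppana {n : ℕ} (hn : 0 < n) (H : SimpleGraph (Fin n)) [DecidableRel H.Adj]
    (d : Fin n → ℝ) (x : Fin n → ℝ) (hx : IsBisection x) : gB H d ≤ cw H x := by
  obtain ⟨hpm, hsum⟩ := hx
  have hsq : ∀ i, x i * x i = 1 := by
    intro i; rcases hpm i with h | h <;> rw [h] <;> ring
  have hs : ∑ i, (x i) ^ 2 = (n : ℝ) := by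
    have : ∀ i ∈ Finset.univ, (x i) ^ 2 = (1 : ℝ) := fun i _ => by rw [sq, hsq]
    rw [Finset.sum_congr rfl this]
    simp
  have hxne : x ≠ 0 := by
    intro h
    have := congrFun h ⟨0, hn⟩
    rcases hpm ⟨0, hn⟩ with h' | h' <;> rw [h'] at this <;> norm_num at this
  set B := adjA H + Matrix.diagonal d with hB
  have hq : x ⬝ᵥ B.mulVec x ≤ (n : ℝ) * lamS B := by
    have h1 := lamS_ge B x hxne hsum
    rw [hs] at h1
    have hnpos : (0 : ℝ) < n := by exact_mod_cast hn
    rw [div_le_iff₀ hnpos] at h1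
    linarith [h1]
  have hterm : ∀ i j, B i j - x i * B i j * x j = adjA H i j * (1 - x i * x j) := by
    intro i j
    by_cases hij : i = j
    · subst hij
      have h1 := hsq i
      simp only [hB, Matrix.add_apply, Matrix.diagonal_apply_eq]
      linear_combination (-(d i)) * h1
    · simp only [hB, Matrix.add_apply, Matrix.diagonal_apply_ne _ hij]
      ring
  have hmq : msum B - x ⬝ᵥ B.mulVec x = ∑ i, ∑ j, adjA H i j * (1 - x i * x j) := by
    rw [quad_eq, msum, ← Finset.sum_sub_distrib]
    refine Finset.sum_congr rfl fun i _ => ?_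
    rw [← Finset.sum_sub_distrib]
    exact Finset.sum_congr rfl fun j _ => hterm i j
  have : gB H d = (msum B - (n : ℝ) * lamS B) / 4 := rfl
  rw [this, cw, ← hmq]
  linarith [hq]

lemma key_entry {n : ℕ} (G G' : SimpleGraph (Fin n)) [DecidableRel G.Adj] [DecidableRel G'.Adj]
    (u v : Fin n) (huv : u ≠ v) (hnadj : ¬ G.Adj u v)
    (hG' : ∀ a b, G'.Adj a b ↔ G.Adj a b ∨ (a = u ∧ b = v) ∨ (a = v ∧ b = u))
    (d : Fin n → ℝ) (i j : Fin n) :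
    (adjA G + Matrix.diagonal d) i j
      = (adjA G' + Matrix.diagonal (fun k => d k - (wv u v k) ^ 2)) i j
        + wv u v i * wv u v j := by
  have hnadj' : ¬ G.Adj v u := fun h => hnadj h.symm
  have hGuu : ¬ G.Adj u u := G.irrefl
  have hGvv : ¬ G.Adj v v := G.irrefl
  simp only [Matrix.add_apply, adjA, Matrix.of_apply, Matrix.diagonal_apply, wv, hG']
  by_cases hiu : i = u <;> by_cases hiv : i = v <;> by_cases hju : j = u <;>
    by_cases hjv : j = v <;> simp_all [eq_comm] <;> ring

section main
variable {n : ℕ} (G G' : SimpleGraph (Fin n)) [DecidableRel G.Adj] [DecidableRel G'.Adj]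
  (u v : Fin n)

lemma msum_eq (huv : u ≠ v) (hnadj : ¬ G.Adj u v)
    (hG' : ∀ a b, G'.Adj a b ↔ G.Adj a b ∨ (a = u ∧ b = v) ∨ (a = v ∧ b = u))
    (d : Fin n → ℝ) :
    msum (adjA G + Matrix.diagonal d)
      = msum (adjA G' + Matrix.diagonal (fun k => d k - (wv u v k) ^ 2)) := by
  unfold msum
  have h : ∀ i j, (adjA G + Matrix.diagonal d) i j
      = (adjA G' + Matrix.diagonal (fun k => d k - (wv u v k) ^ 2)) i j
        + wv u v i * wv u v j := key_entry G G' u v huv hnadj hG' d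
  calc (∑ i, ∑ j, (adjA G + Matrix.diagonal d) i j)
      = (∑ i, ∑ j, ((adjA G' + Matrix.diagonal (fun k => d k - (wv u v k) ^ 2)) i j
          + wv u v i * wv u v j)) := by
        exact Finset.sum_congr rfl fun i _ => Finset.sum_congr rfl fun j _ => h i j
    _ = (∑ i, ∑ j, (adjA G' + Matrix.diagonal (fun k => d k - (wv u v k) ^ 2)) i j)
          + (∑ i, wv u v i) * (∑ j, wv u v j) := by
        rw [Finset.sum_mul_sum, ← Finset.sum_add_distrib]
        refine Finset.sum_congr rfl fun i _ => ?_
        rw [← Finset.sum_add_distrib]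
    _ = _ := by rw [wv_sum u v huv]; ring

lemma quad_le (huv : u ≠ v) (hnadj : ¬ G.Adj u v)
    (hG' : ∀ a b, G'.Adj a b ↔ G.Adj a b ∨ (a = u ∧ b = v) ∨ (a = v ∧ b = u))
    (d : Fin n → ℝ) (x : Fin n → ℝ) :
    x ⬝ᵥ (adjA G' + Matrix.diagonal (fun k => d k - (wv u v k) ^ 2)).mulVec x
      ≤ x ⬝ᵥ (adjA G + Matrix.diagonal d).mulVec x := by
  have h : ∀ i j, (adjA G + Matrix.diagonal d) i j
      = (adjA G' + Matrix.diagonal (fun k => d k - (wv u v k) ^ 2)) i j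
        + wv u v i * wv u v j := key_entry G G' u v huv hnadj hG' d
  rw [quad_eq, quad_eq]
  have : (∑ i, ∑ j, x i * (adjA G + Matrix.diagonal d) i j * x j)
      = (∑ i, ∑ j, x i * (adjA G' + Matrix.diagonal (fun k => d k - (wv u v k) ^ 2)) i j * x j)
        + (∑ i, x i * wv u v i) * (∑ j, x j * wv u v j) := by
    rw [Finset.sum_mul_sum, ← Finset.sum_add_distrib]
    refine Finset.sum_congr rfl fun i _ => ?_
    rw [← Finset.sum_add_distrib]
    refine Finset.sum_congr rfl fun j _ => ?_
    rw [h i j]; ring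
  rw [this]
  nlinarith [sq_nonneg (∑ i, x i * wv u v i)]

lemma cw_nonneg (H : SimpleGraph (Fin n)) [DecidableRel H.Adj] (x : Fin n → ℝ)
    (hx : IsBisection x) : 0 ≤ cw H x := by
  obtain ⟨hpm, -⟩ := hx
  unfold cw
  apply div_nonneg _ (by norm_num)
  refine Finset.sum_nonneg fun i _ => Finset.sum_nonneg fun j _ => mul_nonneg ?_ ?_
  · unfold adjA; simp only [Matrix.of_apply]; split_ifs <;> norm_num
  · rcases hpm i with h | h <;> rcases hpm j with h' | h' <;> rw [h, h'] <;> norm_num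
end main

/-- adding an edge inside one part of an optimum bisection
preserves `h(G') = bw(G')`. -/
theorem add_edge_within_part {n : ℕ} (hn2 : 2 ≤ n) (hne : Even n)
    (G G' : SimpleGraph (Fin n)) [DecidableRel G.Adj] [DecidableRel G'.Adj]
    (hh : hB G = bw G)
    (y : Fin n → ℝ) (hy : IsBisection y) (hopt : cw G y = bw G)
    (u v : Fin n) (huv : u ≠ v) (hsame : y u = y v) (hnadj : ¬ G.Adj u v)
    (hG' : ∀ a b, G'.Adj a b ↔ G.Adj a b ∨ (a = u ∧ b = v) ∨ (a = v ∧ b = u)) :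
    hB G' = bw G' := by
  have hn : 0 < n := lt_of_lt_of_le (by norm_num) hn2
  have hysq : ∀ i, y i * y i = 1 := by
    intro i; rcases hy.1 i with h | h <;> rw [h] <;> ring
  have hcw : cw G' y = cw G y := by
    unfold cw
    congr 1
    refine Finset.sum_congr rfl fun i _ => Finset.sum_congr rfl fun j _ => ?_
    by_cases hcase : (i = u ∧ j = v) ∨ (i = v ∧ j = u)
    · have hz : 1 - y i * y j = 0 := by
        rcases hcase with ⟨hi, hj⟩ | ⟨hi, hj⟩ <;> subst hi <;> subst hj <;>
          rw [hsame] <;> rw [hysq] <;> norm_num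
      rw [hz, mul_zero, mul_zero]
    · have hadj : G'.Adj i j ↔ G.Adj i j := by rw [hG']; tauto
      unfold adjA
      simp only [Matrix.of_apply]
      rw [if_congr hadj rfl rfl]
  have hne' : {r | ∃ d : Fin n → ℝ, r = gB G' d}.Nonempty := ⟨gB G' 0, 0, rfl⟩
  have hbdd : BddAbove {r | ∃ d : Fin n → ℝ, r = gB G' d} := by
    refine ⟨cw G' y, ?_⟩
    rintro r ⟨d, rfl⟩
    exact boppana hn G' d y hy
  have h1 : hB G' ≤ bw G' := by
    have hmemb : cw G' y ∈ {c | ∃ x : Fin n → ℝ, IsBisection x ∧ cw G' x = c} := ⟨y, hy, rfl⟩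
    apply le_csInf ⟨_, hmemb⟩
    rintro c ⟨x, hx, rfl⟩
    apply csSup_le hne'
    rintro r ⟨d, rfl⟩
    exact boppana hn G' d x hx
  have h2 : bw G' ≤ cw G' y := by
    apply csInf_le
    · refine ⟨0, ?_⟩
      rintro c ⟨x, hx, rfl⟩
      exact cw_nonneg _ x hx
    · exact ⟨y, hy, rfl⟩
  have h3 : hB G ≤ hB G' := by
    have hmem2 : gB G 0 ∈ {r | ∃ d : Fin n → ℝ, r = gB G d} := ⟨0, rfl⟩
    apply csSup_le ⟨_, hmem2⟩
    rintro r ⟨d, rfl⟩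
    have hg : gB G d ≤ gB G' (fun k => d k - (wv u v k) ^ 2) := by
      unfold gB
      rw [msum_eq G G' u v huv hnadj hG' d]
      have hl := lamS_mono u v huv _ _ (fun x => quad_le G G' u v huv hnadj hG' d x)
      have hn0 : (0 : ℝ) ≤ n := by positivity
      have := mul_le_mul_of_nonneg_left hl hn0
      linarith
    exact le_trans hg (le_csSup hbdd ⟨_, rfl⟩)
  linarith
end
end
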